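/- Let $n \geq 1$ and let $T_n$ be the $n \times n$ tridiagonal matrix over a field with diagonal entries $d_1, \dots, d_n$, superdiagonal entries $a_1, \dots, a_{n-1}$, and subdiagonal entries $b_1, \dots, b_{n-1}$. Let $1 \leq m \leq n$ and suppose the sequence $c$ defined by $c_1 = d_1$, $c_i = d_i - a_{i-1}b_{i-1}/c_{i-1}$, satisfies $c_i \neq 0$ for $i = 1, \dots, m-1$ (so that $c_1, \dots, c_m$ are well-defined). Define $f_i = \prod_{r=1}^{i} c_r$ for $1 \leq i \leq m$ and $f_k = d_k f_{k-1} - a_{k-1} b_{k-1} f_{k-2}$ for $m+1 \leq k \leq n$ (with $f_0 = 1$). Then $f_n = \det(T_n)$. -/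

import Mathlib

/-!
Expanding `det T_{k+2}` along its last row gives the three-term recurrence
`det T_{k+2} = d_{k+2} det T_{k+1} - a_{k+1} b_{k+1} det T_k`, with `det T_0 = 1`, `det T_1 = d_1`.
The partial products `c_1 ⋯ c_i` obey the same recurrence and initial values as long as
`c_{i-1} ≠ 0`, because `c_{k+2} c_{k+1} = d_{k+2} c_{k+1} - a_{k+1} b_{k+1}`. Hence the hybrid
sequence equals the determinants up to `m`, and beyond `m` it is continued by their recurrence.
-/

/-- The `n × n` tridiagonal matrix with (1-indexed) diagonal entries `d 1, …, d n`,
superdiagonal entries `a 1, …, a (n-1)` and subdiagonal entries `b 1, …, b (n-1)`. -/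
def tridiag {F : Type*} [Field F] (n : ℕ) (d a b : ℕ → F) :
    Matrix (Fin n) (Fin n) F :=
  Matrix.of fun i j =>
    if (i : ℕ) = (j : ℕ) then d ((i : ℕ) + 1)
    else if (j : ℕ) = (i : ℕ) + 1 then a ((i : ℕ) + 1)
    else if (i : ℕ) = (j : ℕ) + 1 then b ((j : ℕ) + 1)
    else 0

/-- The auxiliary sequence `c 1 = d 1`, `c i = d i - a (i-1) * b (i-1) / c (i-1)`. -/
def cseq {F : Type*} [Field F] (d a b : ℕ → F) : ℕ → F
  | 0 => 0
  | 1 => d 1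
  | (k + 2) => d (k + 2) - a (k + 1) * b (k + 1) / cseq d a b (k + 1)

/-- The hybrid sequence of Algorithm 3: `f 0 = 1`, `f i = ∏_{r=1}^{i} c r` for
`1 ≤ i ≤ m`, and `f k = d k * f (k-1) - a (k-1) * b (k-1) * f (k-2)` for `k > m`. -/
def hybridSeq {F : Type*} [Field F] (d a b : ℕ → F) (m : ℕ) : ℕ → F
  | 0 => 1
  | (k + 1) =>
    if k + 1 ≤ m then ∏ r ∈ Finset.Icc 1 (k + 1), cseq d a b r
    else d (k + 1) * hybridSeq d a b m k - a k * b k * hybridSeq d a b m (k - 1)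
  termination_by k => k
  decreasing_by all_goals omega

section
variable {F : Type*} [Field F] {d a b : ℕ → F}
open Matrix

lemma tridiag_apply_diag {n : ℕ} (i : Fin n) : tridiag n d a b i i = d (i + 1) := by
  simp [tridiag]

lemma tridiag_apply_superdiag {n : ℕ} {i j : Fin n} (h : (j : ℕ) = i + 1) :
    tridiag n d a b i j = a (i + 1) := by
  simp only [tridiag, of_apply]
  rw [if_neg (by omega), if_pos h]

lemma tridiag_apply_subdiag {n : ℕ} {i j : Fin n} (h : (i : ℕ) = j + 1) :
    tridiag n d a b i j = b (j + 1) := by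
  simp only [tridiag, of_apply]
  rw [if_neg (by omega), if_neg (by omega), if_pos h]

lemma tridiag_apply_eq_zero_of_succ_lt {n : ℕ} {i j : Fin n} (h : (i : ℕ) + 1 < j) :
    tridiag n d a b i j = 0 := by
  simp only [tridiag, of_apply]
  rw [if_neg (by omega), if_neg (by omega), if_neg (by omega)]

lemma tridiag_apply_eq_zero_of_succ_lt' {n : ℕ} {i j : Fin n} (h : (j : ℕ) + 1 < i) :
    tridiag n d a b i j = 0 := by
  simp only [tridiag, of_apply]
  rw [if_neg (by omega), if_neg (by omega), if_neg (by omega)]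

lemma tridiag_submatrix_castSucc (n : ℕ) :
    (tridiag (n + 1) d a b).submatrix Fin.castSucc Fin.castSucc = tridiag n d a b := by
  ext i j
  simp [tridiag]

/-- The minor of the entry `b (k + 1)` in the expansion of `det T_{k+2}` along its last row:
its last column is `a (k + 1)` times the last unit vector. -/
lemma det_tridiag_minor (k : ℕ) :
    ((tridiag (k + 2) d a b).submatrix Fin.castSucc (Fin.last k).castSucc.succAbove).det =
      a (k + 1) * (tridiag k d a b).det := by
  set N := (tridiag (k + 2) d a b).submatrix Fin.castSucc (Fin.last k).castSucc.succAbove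
  have hskip : ∀ j : Fin k, (Fin.last k).castSucc.succAbove j.castSucc = j.castSucc.castSucc :=
    fun j => Fin.succAbove_of_castSucc_lt _ _ (by simp [Fin.lt_def])
  have hcol : ∀ i : Fin k, N i.castSucc (Fin.last k) = 0 := fun i => by
    simp only [N, submatrix_apply, Fin.succAbove_castSucc_self]
    exact tridiag_apply_eq_zero_of_succ_lt (by simp)
  have hcorner : N (Fin.last k) (Fin.last k) = a (k + 1) := by
    simp only [N, submatrix_apply, Fin.succAbove_castSucc_self]
    exact (tridiag_apply_superdiag (by simp)).trans (by simp)
  have hminor : N.submatrix Fin.castSucc Fin.castSucc = tridiag k d a b := by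
    ext i j
    simp [N, hskip, tridiag]
  rw [det_succ_column _ (Fin.last k), Fin.sum_univ_castSucc,
    Finset.sum_eq_zero fun i _ => by rw [hcol, mul_zero, zero_mul], zero_add,
    Fin.succAbove_last, hcorner, hminor, ← two_mul, pow_mul]
  simp

theorem det_tridiag_succ_succ (k : ℕ) :
    (tridiag (k + 2) d a b).det =
      d (k + 2) * (tridiag (k + 1) d a b).det - a (k + 1) * b (k + 1) * (tridiag k d a b).det := by
  rw [det_succ_row _ (Fin.last (k + 1)), Fin.sum_univ_castSucc, Fin.sum_univ_castSucc,
    Finset.sum_eq_zero fun j _ => by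
      rw [tridiag_apply_eq_zero_of_succ_lt' (by simp), mul_zero, zero_mul],
    zero_add, Fin.succAbove_last, tridiag_submatrix_castSucc, det_tridiag_minor,
    tridiag_apply_diag, tridiag_apply_subdiag (by simp)]
  have hodd : (-1 : F) ^ (k + 1 + k) = -1 := Odd.neg_one_pow ⟨k, by omega⟩
  have heven : (-1 : F) ^ (k + 1 + (k + 1)) = 1 := Even.neg_one_pow ⟨k + 1, rfl⟩
  simp only [Fin.val_last, Fin.val_castSucc, hodd, heven]
  ring

lemma det_tridiag_zero : (tridiag 0 d a b).det = 1 :=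
  det_fin_zero

lemma det_tridiag_one : (tridiag 1 d a b).det = d 1 :=
  (det_fin_one _).trans (tridiag_apply_diag 0)

lemma prod_cseq_succ_succ {k : ℕ} (hc : cseq d a b (k + 1) ≠ 0) :
    ∏ r ∈ Finset.Icc 1 (k + 2), cseq d a b r =
      d (k + 2) * ∏ r ∈ Finset.Icc 1 (k + 1), cseq d a b r -
        a (k + 1) * b (k + 1) * ∏ r ∈ Finset.Icc 1 k, cseq d a b r := by
  rw [Finset.prod_Icc_succ_top (by omega : 1 ≤ k + 2),
    Finset.prod_Icc_succ_top (by omega : 1 ≤ k + 1), cseq]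
  field_simp

theorem prod_cseq_eq_det_tridiag {i : ℕ} (hc : ∀ r, 0 < r → r < i → cseq d a b r ≠ 0) :
    ∏ r ∈ Finset.Icc 1 i, cseq d a b r = (tridiag i d a b).det := by
  induction i using Nat.twoStepInduction with
  | zero => rw [Finset.Icc_eq_empty_of_lt one_pos, Finset.prod_empty, det_tridiag_zero]
  | one => rw [Finset.Icc_self, Finset.prod_singleton, det_tridiag_one, cseq]
  | more k ih₀ ih₁ =>
    rw [prod_cseq_succ_succ (hc (k + 1) k.succ_pos (by omega)), det_tridiag_succ_succ,
      ih₀ fun r h₀ h₁ => hc r h₀ (by omega), ih₁ fun r h₀ h₁ => hc r h₀ (by omega)]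

lemma hybridSeq_of_le {m k : ℕ} (h : k ≤ m) :
    hybridSeq d a b m k = ∏ r ∈ Finset.Icc 1 k, cseq d a b r := by
  cases k with
  | zero => rw [hybridSeq, Finset.Icc_eq_empty_of_lt one_pos, Finset.prod_empty]
  | succ k => rw [hybridSeq, if_pos h]

lemma hybridSeq_succ_succ_of_lt {m k : ℕ} (h : m < k + 2) :
    hybridSeq d a b m (k + 2) =
      d (k + 2) * hybridSeq d a b m (k + 1) - a (k + 1) * b (k + 1) * hybridSeq d a b m k := by
  rw [hybridSeq, if_neg (by omega)]
  rfl

end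

theorem hybrid_algorithm_correct_general {F : Type*} [Field F] (n m : ℕ)
    (hm : 1 ≤ m) (d a b : ℕ → F)
    (hc : ∀ i, 1 ≤ i → i ≤ m - 1 → cseq d a b i ≠ 0) :
    hybridSeq d a b m n = (tridiag n d a b).det := by
  have h_le : ∀ k ≤ m, hybridSeq d a b m k = (tridiag k d a b).det := fun k hk => by
    rw [hybridSeq_of_le hk, prod_cseq_eq_det_tridiag fun r h₀ h₁ => hc r h₀ (by omega)]
  induction n using Nat.twoStepInduction with
  | zero => exact h_le 0 m.zero_le
  | one => exact h_le 1 hm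
  | more k ih₀ ih₁ =>
    rcases le_or_gt (k + 2) m with h | h
    · exact h_le (k + 2) h
    · rw [hybridSeq_succ_succ_of_lt h, ih₀, ih₁, det_tridiag_succ_succ]

/-- Correctness of the hybrid algorithm: if `c i ≠ 0` for `i = 1, …, m-1`,
then the hybrid sequence value at `n` equals `det Tₙ`. -/
theorem hybrid_algorithm_correct {F : Type*} [Field F] (n m : ℕ) (hn : 1 ≤ n)
    (hm : 1 ≤ m) (hmn : m ≤ n) (d a b : ℕ → F)
    (hc : ∀ i, 1 ≤ i → i ≤ m - 1 → cseq d a b i ≠ 0) :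
    hybridSeq d a b m n = (tridiag n d a b).det :=
  hybrid_algorithm_correct_general n m hm d a b hc
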